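/- arXiv:math/0112092 — 2 statements merged into one kernel-verified Lean document; each statement's English description precedes it below -/
import Mathlib

section
/- A permutation ρ = (ρ_1,…,ρ_n) of {1,…,n} avoids the pattern (3,2,1) if and only if its 321-height vector (h_1,…,h_n) satisfies h_i ≤ h_{i+1} + 1 for all 1 ≤ i ≤ n−1. (Equivalently: the path ψ_{(3,2,1)}(ρ) is an ordinary Dyck path, i.e., has no down-jumps, if and only if ρ is (3,2,1)-avoiding.) -/
/-!
Write `M_i = max_{t ≤ i} ρ t`. In both cases of its definition, `h_i` counts the positions
`k > i` with `ρ k < M_i`, subject to the extra condition `ρ i < ρ k` when `ρ i` is not a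
left-to-right maximum.
A permutation avoids 321 exactly when every entry that is not a left-to-right maximum is smaller
than everything to its right. Under this condition the set counted by `h_i`, minus position
`i + 1`, lies inside the set counted by `h_{i+1}`, so `h_i ≤ h_{i+1} + 1`. Conversely, at the
first non-left-to-right maximum `ρ (i+1)` having a smaller entry `ρ k` to its right, the set
counted by `h_i` contains that of `h_{i+1}` together with `i + 1` and `k`, so `h_i ≥ h_{i+1} + 2`.
-/

open scoped Classical

def IsLRMax {n : ℕ} (ρ : Equiv.Perm (Fin n)) (i : Fin n) : Prop :=
  ∀ j, j < i → ρ j < ρ i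

def IsLastLRMaxBefore {n : ℕ} (ρ : Equiv.Perm (Fin n)) (m i : Fin n) : Prop :=
  m < i ∧ IsLRMax ρ m ∧ ∀ p, m < p → p < i → ¬ IsLRMax ρ p

noncomputable def height321 {n : ℕ} (ρ : Equiv.Perm (Fin n)) (i : Fin n) : ℕ :=
  if IsLRMax ρ i then
    (Finset.univ.filter (fun k => i < k ∧ ρ k < ρ i)).card
  else
    (Finset.univ.filter (fun k => i < k ∧ ρ i < ρ k ∧
      ∃ m, IsLastLRMaxBefore ρ m i ∧ ρ k < ρ m)).card

section

variable {n : ℕ} (ρ : Equiv.Perm (Fin n))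

def Avoids321 : Prop :=
  ∀ a b c : Fin n, a < b → b < c → ¬(ρ c < ρ b ∧ ρ b < ρ a)

noncomputable def heightSet (i : Fin n) : Finset (Fin n) :=
  Finset.univ.filter fun k =>
    i < k ∧ (∃ t ≤ i, ρ k < ρ t) ∧ (¬ IsLRMax ρ i → ρ i < ρ k)

variable {ρ} {i j k : Fin n}

lemma IsLRMax.le (hi : IsLRMax ρ i) (hj : j ≤ i) : ρ j ≤ ρ i := by
  rcases hj.lt_or_eq with hj | rfl
  exacts [(hi j hj).le, le_rfl]

lemma exists_lt_of_not_isLRMax (hi : ¬ IsLRMax ρ i) : ∃ j < i, ρ i < ρ j := by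
  simp only [IsLRMax, not_forall, not_lt] at hi
  obtain ⟨j, hj, hle⟩ := hi
  exact ⟨j, hj, hle.lt_of_ne (ρ.injective.ne hj.ne')⟩

lemma exists_isLastLRMaxBefore (hi : ¬ IsLRMax ρ i) :
    ∃ m, IsLastLRMaxBefore ρ m i ∧ ∀ j < i, ρ j ≤ ρ m := by
  obtain ⟨j, hj, -⟩ := exists_lt_of_not_isLRMax hi
  obtain ⟨m, hm, hmax⟩ := Finset.exists_max_image (Finset.univ.filter (· < i)) ρ
    ⟨j, by simpa using hj⟩
  simp only [Finset.mem_filter, Finset.mem_univ, true_and] at hm hmax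
  refine ⟨m, ⟨hm, fun q hq => ?_, fun p hmp hpi hp => ?_⟩, hmax⟩
  · exact (hmax q (hq.trans hm)).lt_of_ne (ρ.injective.ne hq.ne)
  · exact (hp m hmp).not_ge (hmax p hpi)

lemma height321_eq_card_heightSet (i : Fin n) : height321 ρ i = (heightSet ρ i).card := by
  rw [height321, heightSet]
  split_ifs with hi
  · refine congrArg _ (Finset.filter_congr fun k _ => ?_)
    simp only [hi, not_true_eq_false, false_imp_iff, and_true]
    exact and_congr_right fun _ =>
      ⟨fun h => ⟨i, le_rfl, h⟩, fun ⟨t, ht, h⟩ => h.trans_le (IsLRMax.le hi ht)⟩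
  · obtain ⟨m, hm, hmax⟩ := exists_isLastLRMaxBefore hi
    refine congrArg _ (Finset.filter_congr fun k _ => ?_)
    simp only [hi, not_false_eq_true, true_imp_iff]
    constructor
    · rintro ⟨hik, hk, m', hm', hkm'⟩
      exact ⟨hik, ⟨m', hm'.1.le, hkm'⟩, hk⟩
    · rintro ⟨hik, ⟨t, hti, hkt⟩, hk⟩
      have hti : t < i := hti.lt_of_ne (by rintro rfl; exact hk.not_gt hkt)
      exact ⟨hik, hk, m, hm, hkt.trans_le (hmax t hti)⟩

lemma avoids321_iff_forall_not_isLRMax :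
    Avoids321 ρ ↔ ∀ j, ¬ IsLRMax ρ j → ∀ k, j < k → ρ j < ρ k := by
  constructor
  · intro h j hj k hjk
    obtain ⟨p, hpj, hjp⟩ := exists_lt_of_not_isLRMax hj
    refine lt_of_not_ge fun hkj => h p j k hpj hjk ⟨?_, hjp⟩
    exact hkj.lt_of_ne (ρ.injective.ne hjk.ne')
  · rintro h a b c hab hbc ⟨hcb, hba⟩
    exact (h b (fun hb => (hb a hab).not_gt hba) c hbc).not_gt hcb

lemma heightSet_subset_insert (hij : i ⋖ j)
    (hj : ¬ IsLRMax ρ j → ∀ k, j < k → ρ j < ρ k) :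
    heightSet ρ i ⊆ insert j (heightSet ρ j) := by
  intro k hk
  simp only [heightSet, Finset.mem_insert, Finset.mem_filter, Finset.mem_univ, true_and] at hk ⊢
  obtain ⟨hik, ⟨t, hti, hkt⟩, -⟩ := hk
  refine or_iff_not_imp_left.2 fun hkj => ?_
  have hjk : j < k := (hij.ge_of_gt hik).lt_of_ne (Ne.symm hkj)
  exact ⟨hjk, ⟨t, hti.trans hij.le, hkt⟩, fun hj' => hj hj' k hjk⟩

lemma insert_insert_heightSet_subset (hij : i ⋖ j)
    (hi : ¬ IsLRMax ρ i → ∀ k, i < k → ρ i < ρ k)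
    (hj : ¬ IsLRMax ρ j) (hjk : j < k) (hkj : ρ k < ρ j) :
    insert j (insert k (heightSet ρ j)) ⊆ heightSet ρ i := by
  obtain ⟨p, hpj, hjp⟩ := exists_lt_of_not_isLRMax hj
  have hpi : p ≤ i := hij.le_of_lt hpj
  have hij' : ¬ IsLRMax ρ i → ρ i < ρ j := fun hi' => hi hi' j hij.lt
  intro l hl
  simp only [heightSet, hj, Finset.mem_insert, Finset.mem_filter, Finset.mem_univ, true_and,
    not_false_eq_true, true_imp_iff] at hl ⊢
  rcases hl with rfl | rfl | ⟨hjl, ⟨t, htj, hlt⟩, hjl'⟩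
  · exact ⟨hij.lt, ⟨p, hpi, hjp⟩, hij'⟩
  · have hil : i < l := hij.lt.trans hjk
    exact ⟨hil, ⟨p, hpi, hkj.trans hjp⟩, fun hi' => hi hi' l hil⟩
  · have htj : t < j := htj.lt_of_ne (by rintro rfl; exact hjl'.not_gt hlt)
    exact ⟨hij.lt.trans hjl, ⟨t, hij.le_of_lt htj, hlt⟩, fun hi' => (hij' hi').trans hjl'⟩

lemma height321_add_two_le (hij : i ⋖ j) (hi : ¬ IsLRMax ρ i → ∀ k, i < k → ρ i < ρ k)
    (hj : ¬ IsLRMax ρ j) (hjk : j < k) (hkj : ρ k < ρ j) :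
    height321 ρ j + 2 ≤ height321 ρ i := by
  have hk : k ∉ heightSet ρ j := by simp [heightSet, hj, hkj.le]
  have hj' : j ∉ insert k (heightSet ρ j) := by simp [heightSet, hjk.ne]
  rw [height321_eq_card_heightSet, height321_eq_card_heightSet]
  calc (heightSet ρ j).card + 2 = (insert j (insert k (heightSet ρ j))).card := by
        rw [Finset.card_insert_of_notMem hj', Finset.card_insert_of_notMem hk]
    _ ≤ (heightSet ρ i).card :=
        Finset.card_le_card (insert_insert_heightSet_subset hij hi hj hjk hkj)

lemma avoids321_iff_forall_covBy :
    Avoids321 ρ ↔ ∀ i j, i ⋖ j → height321 ρ i ≤ height321 ρ j + 1 := by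
  rw [avoids321_iff_forall_not_isLRMax]
  constructor
  · intro h i j hij
    rw [height321_eq_card_heightSet, height321_eq_card_heightSet]
    exact (Finset.card_le_card (heightSet_subset_insert hij (h j))).trans
      (Finset.card_insert_le _ _)
  · intro h j
    induction j using WellFoundedLT.induction with
    | _ j ih =>
      intro hj k hjk
      obtain ⟨p, hpj, -⟩ := exists_lt_of_not_isLRMax hj
      obtain ⟨i, -, hij⟩ := exists_le_covBy_of_lt hpj
      refine lt_of_not_ge fun hkj => ?_
      have := height321_add_two_le hij (ih i hij.lt) hj hjk (hkj.lt_of_ne (ρ.injective.ne hjk.ne'))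
      exact absurd (h i j hij) (by omega)

end

/-- A permutation avoids the pattern (3,2,1) if and only if its 321-height vector satisfies
`h i ≤ h (i+1) + 1` for all consecutive positions (i.e. the path `ψ_(3,2,1)(ρ)` is an
ordinary Dyck path, without down-jumps). -/
theorem avoids321_iff_height321_no_jump {n : ℕ} (ρ : Equiv.Perm (Fin n)) :
    (∀ a b c : Fin n, a < b → b < c → ¬(ρ c < ρ b ∧ ρ b < ρ a)) ↔
    (∀ i : ℕ, ∀ hi : i + 1 < n,
      height321 ρ ⟨i, by omega⟩ ≤ height321 ρ ⟨i + 1, hi⟩ + 1) := by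
  refine avoids321_iff_forall_covBy.trans
    ⟨fun h i hi => h _ _ (by simp), fun h i j hij => ?_⟩
  obtain ⟨hj, hji⟩ : ∃ hj : i.val + 1 < n, (⟨i.val + 1, hj⟩ : Fin n) = j := by
    simp only [Fin.covBy_iff, Nat.covBy_iff_add_one_eq] at hij
    exact ⟨hij ▸ j.isLt, Fin.ext hij⟩
  rw [← hji]
  exact h i hj
end

section
/- Let ρ be a permutation of {1,…,n} with 321-height vector (h_1,…,h_n), and suppose ρ has exactly r occurrences of the pattern (3,2,1), where r ≥ 1. Then the total depth of down-jumps s = Σ_{i=1}^{n−1} max(h_i − h_{i+1} − 1, 0) satisfies 1 ≤ s ≤ r. (That is, a permutation with exactly r ≥ 1 occurrences of (3,2,1) is mapped by ψ_{(3,2,1)} to a generalized Dyck path with at least one and at most r down-jumps.) -/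
/-!
Let `M_i` be the maximum of `ρ` on positions `≤ i`. Then `h_i` counts the entries right of `i`
below `M_i` (and above `ρ_i` when `ρ_i` is not a left-to-right maximum). Since `M_i ≤ M_{i+1}`,
going from `i` to `i+1` loses at most the entry `i+1` itself and the entries right of `i+1`
below `ρ_{i+1}`; when `ρ_{i+1}` is not a left-to-right maximum each of those closes a 321 with
middle entry at `i+1`, so the down-jump at `i` is bounded by the occurrences with that middle.
Conversely, if `b` is the leftmost middle entry of an occurrence `(a, b, c)`, position `b - 1` is
the middle of no occurrence, so its height counts `b`, `c` and everything counted at `b`: a drop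
of at least `2`.
-/

open scoped Classical

open Finset

section

variable {n : ℕ} {ρ : Equiv.Perm (Fin n)}

def prefixMax (ρ : Equiv.Perm (Fin n)) (i : Fin n) : Fin n :=
  (Iic i).sup' nonempty_Iic ρ

lemma le_prefixMax {i j : Fin n} (hji : j ≤ i) : ρ j ≤ prefixMax ρ i :=
  le_sup' ρ (mem_Iic.2 hji)

lemma exists_le_apply_eq_prefixMax (ρ : Equiv.Perm (Fin n)) (i : Fin n) :
    ∃ j ≤ i, ρ j = prefixMax ρ i := by
  obtain ⟨j, hj, hmax⟩ := exists_mem_eq_sup' (nonempty_Iic (a := i)) ρ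
  exact ⟨j, mem_Iic.1 hj, hmax.symm⟩

lemma prefixMax_mono (ρ : Equiv.Perm (Fin n)) : Monotone (prefixMax ρ) := fun _ _ h =>
  sup'_le _ _ fun _ hj => le_prefixMax ((mem_Iic.1 hj).trans h)

lemma IsLRMax.prefixMax_eq {i : Fin n} (hi : IsLRMax ρ i) : prefixMax ρ i = ρ i := by
  refine le_antisymm (sup'_le _ _ fun j hj => ?_) (le_prefixMax le_rfl)
  rcases (mem_Iic.1 hj).lt_or_eq with hji | rfl
  · exact (hi j hji).le
  · exact le_rfl

lemma exists_lt_apply_lt_of_not_isLRMax {i : Fin n} (hi : ¬ IsLRMax ρ i) :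
    ∃ j < i, ρ i < ρ j := by
  simp only [IsLRMax, not_forall, not_lt] at hi
  obtain ⟨j, hji, hij⟩ := hi
  exact ⟨j, hji, hij.lt_of_ne (ρ.injective.ne hji.ne')⟩

lemma apply_lt_prefixMax_of_not_isLRMax {i : Fin n} (hi : ¬ IsLRMax ρ i) :
    ρ i < prefixMax ρ i := by
  obtain ⟨j, hji, hij⟩ := exists_lt_apply_lt_of_not_isLRMax hi
  exact hij.trans_le (le_prefixMax hji.le)

lemma prefixMax_eq_of_not_isLRMax_succ {p q : Fin n} (hpq : (q : ℕ) = p + 1)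
    (hq : ¬ IsLRMax ρ q) : prefixMax ρ q = prefixMax ρ p := by
  refine le_antisymm ?_ (prefixMax_mono ρ (Fin.le_def.2 (by omega)))
  obtain ⟨j, hjq, hj⟩ := exists_le_apply_eq_prefixMax ρ q
  have hjq' : j ≠ q := by
    rintro rfl
    exact (apply_lt_prefixMax_of_not_isLRMax hq).ne hj
  exact hj ▸ le_prefixMax (Fin.le_def.2 (by have := Fin.val_ne_of_ne hjq'; omega))

lemma IsLastLRMaxBefore.unique {m m' i : Fin n} (h : IsLastLRMaxBefore ρ m i)
    (h' : IsLastLRMaxBefore ρ m' i) : m = m' := by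
  rcases lt_trichotomy m m' with hm | hm | hm
  · exact absurd h'.2.1 (h.2.2 m' hm h'.1)
  · exact hm
  · exact absurd h.2.1 (h'.2.2 m hm h.1)

lemma exists_isLastLRMaxBefore_apply_eq_prefixMax {i : Fin n} (hi : ¬ IsLRMax ρ i) :
    ∃ m, IsLastLRMaxBefore ρ m i ∧ ρ m = prefixMax ρ i := by
  obtain ⟨m, hmi, hm⟩ := exists_le_apply_eq_prefixMax ρ i
  have hmax : IsLRMax ρ m := fun j hjm =>
    (hm ▸ le_prefixMax (hjm.le.trans hmi)).lt_of_ne (ρ.injective.ne hjm.ne)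
  have hmi' : m < i := hmi.lt_of_ne (by rintro rfl; exact hi hmax)
  refine ⟨m, ⟨hmi', hmax, fun p hmp hpi hp => ?_⟩, hm⟩
  exact (hp m hmp).not_ge (hm ▸ le_prefixMax hpi.le)

noncomputable def heightSet321 (ρ : Equiv.Perm (Fin n)) (i : Fin n) : Finset (Fin n) :=
  {k | i < k ∧ ρ k < prefixMax ρ i ∧ (IsLRMax ρ i ∨ ρ i < ρ k)}

lemma height321_eq_card_heightSet321 (ρ : Equiv.Perm (Fin n)) (i : Fin n) :
    height321 ρ i = #(heightSet321 ρ i) := by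
  unfold height321 heightSet321
  split_ifs with hi
  · congr 1
    ext k
    simp [hi, hi.prefixMax_eq]
  · obtain ⟨m, hm, hmax⟩ := exists_isLastLRMaxBefore_apply_eq_prefixMax hi
    congr 1
    ext k
    simp only [mem_filter, mem_univ, true_and, hi, false_or]
    constructor
    · rintro ⟨hik, hlt, m', hm', hk⟩
      exact ⟨hik, hmax ▸ hm'.unique hm ▸ hk, hlt⟩
    · rintro ⟨hik, hk, hlt⟩
      exact ⟨hik, hlt, m, hm, hmax ▸ hk⟩

lemma height321_le_card_lt_prefixMax (ρ : Equiv.Perm (Fin n)) (i : Fin n) :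
    height321 ρ i ≤ #{k | i < k ∧ ρ k < prefixMax ρ i} := by
  rw [height321_eq_card_heightSet321]
  exact card_le_card fun k hk => by
    simp only [heightSet321, mem_filter, mem_univ, true_and] at hk ⊢
    exact ⟨hk.1, hk.2.1⟩

noncomputable def occurrences321 (ρ : Equiv.Perm (Fin n)) : Finset (Fin n × Fin n × Fin n) :=
  {t | t.1 < t.2.1 ∧ t.2.1 < t.2.2 ∧ ρ t.2.2 < ρ t.2.1 ∧ ρ t.2.1 < ρ t.1}

lemma card_lt_apply_le_card_occurrences321_middle {q : Fin n} (hq : ¬ IsLRMax ρ q) :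
    #{k | q < k ∧ ρ k < ρ q} ≤ #{t ∈ occurrences321 ρ | (t.2.1 : ℕ) = q} := by
  obtain ⟨j, hjq, hqj⟩ := exists_lt_apply_lt_of_not_isLRMax hq
  refine card_le_card_of_injOn (fun k => (j, q, k)) (fun k hk => ?_)
    (fun _ _ _ _ h => congrArg (·.2.2) h)
  simp only [coe_filter, mem_univ, true_and] at hk
  simp [occurrences321, hjq, hqj, hk.1, hk.2]

lemma card_lt_prefixMax_le_succ {p q : Fin n} (hpq : (q : ℕ) = p + 1) :
    #{k | p < k ∧ ρ k < prefixMax ρ p} ≤ #{k | q < k ∧ ρ k < prefixMax ρ q} + 1 := by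
  refine (card_le_card fun k hk => ?_).trans (card_insert_le q _)
  simp only [mem_insert, mem_filter, mem_univ, true_and] at hk ⊢
  rcases eq_or_ne k q with rfl | hkq
  · exact Or.inl rfl
  · refine Or.inr ⟨Fin.lt_def.2 ?_, hk.2.trans_le (prefixMax_mono ρ (Fin.le_def.2 (by omega)))⟩
    have := Fin.val_ne_of_ne hkq
    have := Fin.lt_def.1 hk.1
    omega

lemma card_lt_prefixMax_le_height321_add (ρ : Equiv.Perm (Fin n)) (q : Fin n) :
    #{k | q < k ∧ ρ k < prefixMax ρ q} ≤
      height321 ρ q + #{t ∈ occurrences321 ρ | (t.2.1 : ℕ) = q} := by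
  rw [height321_eq_card_heightSet321]
  by_cases hq : IsLRMax ρ q
  · refine le_add_right (card_le_card fun k hk => ?_)
    simp only [heightSet321, mem_filter, mem_univ, true_and] at hk ⊢
    exact ⟨hk.1, hk.2, Or.inl hq⟩
  · calc #{k | q < k ∧ ρ k < prefixMax ρ q}
        ≤ #(heightSet321 ρ q ∪ ({k | q < k ∧ ρ k < ρ q} : Finset (Fin n))) := card_le_card fun k hk => ?_
      _ ≤ _ := (card_union_le _ _).trans
          (Nat.add_le_add_left (card_lt_apply_le_card_occurrences321_middle hq) _)
    simp only [heightSet321, mem_union, mem_filter, mem_univ, true_and] at hk ⊢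
    rcases lt_or_gt_of_ne (ρ.injective.ne hk.1.ne' : ρ k ≠ ρ q) with hkq | hqk
    · exact Or.inr ⟨hk.1, hkq⟩
    · exact Or.inl ⟨hk.1, hk.2, Or.inr hqk⟩

lemma height321_le_succ_add {p q : Fin n} (hpq : (q : ℕ) = p + 1) :
    height321 ρ p ≤ height321 ρ q + 1 + #{t ∈ occurrences321 ρ | (t.2.1 : ℕ) = q} := by
  have := card_lt_prefixMax_le_height321_add ρ q
  calc height321 ρ p ≤ #{k | p < k ∧ ρ k < prefixMax ρ p} := height321_le_card_lt_prefixMax ρ p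
    _ ≤ #{k | q < k ∧ ρ k < prefixMax ρ q} + 1 := card_lt_prefixMax_le_succ hpq
    _ ≤ _ := by omega

lemma heightSet321_eq_of_forall_ne_middle {p : Fin n}
    (hp : ∀ t ∈ occurrences321 ρ, t.2.1 ≠ p) :
    heightSet321 ρ p = ({k | p < k ∧ ρ k < prefixMax ρ p} : Finset (Fin n)) := by
  ext k
  simp only [heightSet321, mem_filter, mem_univ, true_and, and_congr_right_iff]
  refine fun hpk => and_iff_left_of_imp fun _ => ?_
  by_cases hmax : IsLRMax ρ p
  · exact Or.inl hmax
  refine Or.inr ((ρ.injective.ne hpk.ne).lt_or_gt.resolve_right fun hkp => ?_)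
  obtain ⟨j, hjp, hpj⟩ := exists_lt_apply_lt_of_not_isLRMax hmax
  exact hp (j, p, k) (by simp [occurrences321, hjp, hpk, hkp, hpj]) rfl

lemma height321_add_two_le_s14 {a b c p : Fin n} (hocc : (a, b, c) ∈ occurrences321 ρ)
    (hmin : ∀ t ∈ occurrences321 ρ, b ≤ t.2.1) (hpb : (b : ℕ) = p + 1) :
    height321 ρ b + 2 ≤ height321 ρ p := by
  simp only [occurrences321, mem_filter, mem_univ, true_and] at hocc
  obtain ⟨hab, hbc, hcb, hba⟩ := hocc
  have hb : ¬ IsLRMax ρ b := fun hmax => hba.not_gt (hmax a hab)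
  have hpm := prefixMax_eq_of_not_isLRMax_succ hpb hb
  have hpb' : p < b := Fin.lt_def.2 (by omega)
  have hbp : ρ b < prefixMax ρ p := hba.trans_le (le_prefixMax (Fin.le_def.2 (by
    have := Fin.lt_def.1 hab; omega)))
  have hp := heightSet321_eq_of_forall_ne_middle (ρ := ρ) (p := p) fun t ht htp =>
    (hmin t ht).not_gt (htp ▸ hpb')
  have hsub : insert b (insert c (heightSet321 ρ b)) ⊆ heightSet321 ρ p := by
    rw [hp]
    intro k hk
    simp only [heightSet321, mem_insert, mem_filter, mem_univ, true_and, hpm] at hk ⊢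
    rcases hk with rfl | rfl | hk
    · exact ⟨hpb', hbp⟩
    · exact ⟨hpb'.trans hbc, hcb.trans hbp⟩
    · exact ⟨hpb'.trans hk.1, hk.2.1⟩
  have hc : c ∉ heightSet321 ρ b := by
    simp [heightSet321, hb, hcb.not_gt]
  have hb' : b ∉ insert c (heightSet321 ρ b) := by
    simp [heightSet321, hbc.ne]
  rw [height321_eq_card_heightSet321, height321_eq_card_heightSet321]
  calc #(heightSet321 ρ b) + 2 = #(insert b (insert c (heightSet321 ρ b))) := by
        rw [card_insert_of_notMem hb', card_insert_of_notMem hc]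
    _ ≤ #(heightSet321 ρ p) := card_le_card hsub

end

lemma sum_card_filter_eq_succ_le_card {α : Type*} (s : Finset α) (g : α → ℕ) (m : ℕ) :
    ∑ i ∈ range m, #{x ∈ s | g x = i + 1} ≤ #s := by
  calc ∑ i ∈ range m, #{x ∈ s | g x = i + 1}
      = ∑ j ∈ (range m).map (addRightEmbedding 1), #{x ∈ s | g x = j} := (sum_map (range m) (addRightEmbedding 1) fun j => #{x ∈ s | g x = j}).symm
    _ = #{x ∈ s | g x ∈ (range m).map (addRightEmbedding 1)} :=
      sum_card_fiberwise_eq_card_filter _ _ _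
    _ ≤ #s := card_filter_le _ _

/-- If `ρ` has exactly `r ≥ 1` occurrences of the pattern (3,2,1), then the total depth of
down-jumps `s = Σ_{i=1}^{n-1} max (h_i - h_{i+1} - 1) 0` of the path `ψ_(3,2,1)(ρ)`
(computed from the 321-height vector `h`, here via truncated subtraction) satisfies
`1 ≤ s ≤ r`. -/
theorem jumpsum_le_card_occurrences_321 {n r : ℕ} (hr : 1 ≤ r) (ρ : Equiv.Perm (Fin n))
    (h : ℕ → ℕ) (hh : ∀ i : Fin n, h (i : ℕ) = height321 ρ i)
    (hocc : (Finset.univ.filter (fun t : Fin n × Fin n × Fin n =>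
        t.1 < t.2.1 ∧ t.2.1 < t.2.2 ∧ ρ t.2.2 < ρ t.2.1 ∧ ρ t.2.1 < ρ t.1)).card = r) :
    1 ≤ ∑ i ∈ Finset.range (n - 1), (h i - h (i + 1) - 1) ∧
    ∑ i ∈ Finset.range (n - 1), (h i - h (i + 1) - 1) ≤ r := by
  change #(occurrences321 ρ) = r at hocc
  constructor
  · obtain ⟨⟨a, b, c⟩, hmem, hmin⟩ :=
      exists_min_image (occurrences321 ρ) (·.2.1) (card_pos.1 (hocc ▸ hr))
    have hab : (a : ℕ) < b := by simp only [occurrences321, mem_filter] at hmem; exact hmem.2.1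
    let p : Fin n := ⟨b - 1, by omega⟩
    have hjump := height321_add_two_le_s14 hmem hmin (p := p) (by simp only [p]; omega)
    calc 1 ≤ h p - h (p + 1) - 1 := by
          rw [show (p : ℕ) + 1 = b by simp only [p]; omega, hh, hh]
          omega
      _ ≤ _ := single_le_sum (f := fun i => h i - h (i + 1) - 1) (fun _ _ => Nat.zero_le _)
          (mem_range.2 (by simp only [p]; omega))
  · calc ∑ i ∈ range (n - 1), (h i - h (i + 1) - 1)
        ≤ ∑ i ∈ range (n - 1), #{t ∈ occurrences321 ρ | (t.2.1 : ℕ) = i + 1} := by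
          refine sum_le_sum fun i hi => ?_
          have hi := mem_range.1 hi
          have := height321_le_succ_add (ρ := ρ) (p := ⟨i, by omega⟩) (q := ⟨i + 1, by omega⟩) rfl
          simp only at this
          rw [hh ⟨i, by omega⟩, hh ⟨i + 1, by omega⟩]
          omega
      _ ≤ #(occurrences321 ρ) := sum_card_filter_eq_succ_le_card _ _ _
      _ = r := hocc
end
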